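/- arXiv:2605.21733 — 3 statements merged into one kernel-verified Lean document; each statement's English description precedes it below -/
import Mathlib

section
/- Let F = F_{[a₁,b₁]} ⋯ F_{[a_m,b_m]} be a star network of order n with internal vertices x₁,…,x_m, and let π be a covering path family of F. Then the triple (π_i, π_j, k) is a defect of π if and only if i < j and π_j ≺_k π_i (i.e., π_j enters x_k on a strictly lower edge than π_i). -/
/-!  Star networks, covering path families, crossings and defects,
     following Parisi–Skandera–Spahiu–Wang.

A star network of order `n` is a (possibly condensed) concatenation
`F_{[a₁,b₁]} ⋯ F_{[a_m,b_m]}` of simple star networks.  We model it by the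
sequence of intervals (`lo k`, `hi k`, levels `0,…,n-1` from bottom to top,
star `k` acting between stage `k` and stage `k+1`) together with a boolean
function recording, for each pair of internal vertices, whether the parallel
edges between them have been condensed into one multi-edge.  -/
structure StarNetwork (n : ℕ) where
  m : ℕ
  lo : Fin m → Fin n
  hi : Fin m → Fin n
  lo_le_hi : ∀ k, lo k ≤ hi k
  cond : Fin m → Fin m → Bool

namespace StarNetwork

variable {n : ℕ} (F : StarNetwork n)

/-- Level `c` belongs to the interval of the `k`-th star (stars are indexed
from `0`; for `k ≥ m` this is false). -/
def memI (k : ℕ) (c : Fin n) : Prop :=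
  ∃ h : k < F.m, F.lo ⟨k, h⟩ ≤ c ∧ c ≤ F.hi ⟨k, h⟩

/-- The set `I_{j,l}` of levels passing directly from internal vertex `x_j` to
internal vertex `x_l`; its cardinality is the number `μ(x_j,x_l)` of parallel
edges between `x_j` and `x_l` in the plain concatenation. -/
def Iset (j l : Fin F.m) : Finset (Fin n) :=
  ((Finset.Icc (F.lo j) (F.hi j)) ∩ (Finset.Icc (F.lo l) (F.hi l))) \
    ((Finset.Ioo j l).biUnion fun p => Finset.Icc (F.lo p) (F.hi p))

/-- A (raw) covering path family of the star network `F`: path `i` starts at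
source `i` (level `i` at stage `0`) and `traj i k` is the level of path `i`
after passing the first `k` stars.  A path not entering a star keeps its
level; the paths entering a star exit it on the levels of its interval;
distinct paths occupy distinct levels at every stage.  These conditions say
exactly that every edge of `F` lies on as many paths as its multiplicity. -/
structure Raw where
  traj : Fin n → ℕ → Fin n
  init : ∀ i, traj i 0 = i
  inj : ∀ k, Function.Injective fun i => traj i k
  step_out : ∀ i k, ¬ F.memI k (traj i k) → traj i (k + 1) = traj i k
  step_in : ∀ i k, F.memI k (traj i k) → F.memI k (traj i (k + 1))

namespace Raw

variable {F} (π : F.Raw)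

/-- The type of the path family: path `i` terminates at sink `ptype π i`. -/
noncomputable def ptype : Equiv.Perm (Fin n) :=
  Equiv.ofBijective (fun i => π.traj i F.m)
    (Finite.injective_iff_bijective.mp (π.inj F.m))

/-- Path `i` passes through (enters) the internal vertex `x_k`. -/
def enters (i : Fin n) (k : Fin F.m) : Prop :=
  F.lo k ≤ π.traj i k.val ∧ π.traj i k.val ≤ F.hi k

/-- Paths `i` and `j` enter `x_k` on the same (necessarily condensed) edge. -/
def sameEnter (i j : Fin n) (k : Fin F.m) : Prop :=
  π.enters i k ∧ π.enters j k ∧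
    ∃ p : Fin F.m, p < k ∧ F.cond p k = true ∧
      π.traj i k.val ∈ F.Iset p k ∧ π.traj j k.val ∈ F.Iset p k

/-- Paths `π_i` and `π_j` meet at `x_k`: `x_k` is the initial vertex of a
connected component of their intersection. -/
def meet (i j : Fin n) (k : Fin F.m) : Prop :=
  i ≠ j ∧ π.enters i k ∧ π.enters j k ∧ ¬ π.sameEnter i j k

/-- `π_i ≺_k π_j` : both paths enter `x_k` and `π_i` enters on a strictly
lower edge than `π_j`. -/
def precAt (i j : Fin n) (k : Fin F.m) : Prop :=
  π.enters i k ∧ π.enters j k ∧ ¬ π.sameEnter i j k ∧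
    π.traj i k.val < π.traj j k.val

/-- `π_i ∼_k π_j` : both paths enter `x_k` on the same edge. -/
def simAt (i j : Fin n) (k : Fin F.m) : Prop :=
  π.enters i k ∧ π.enters j k ∧ (i = j ∨ π.sameEnter i j k)

/-- `π_i ≾_k π_j`. -/
def precsimAt (i j : Fin n) (k : Fin F.m) : Prop :=
  π.precAt i j k ∨ π.simAt i j k

/-- Paths `i` and `j` travel together from `x_k` directly to `x_l` on a
common (condensed) edge. -/
def linked (i j : Fin n) (k l : Fin F.m) : Prop :=
  k < l ∧ F.cond k l = true ∧
    π.traj i (k.val + 1) ∈ F.Iset k l ∧ π.traj j (k.val + 1) ∈ F.Iset k l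

/-- `(x_k, …, x_l)` is a crossing of `π_i` and `π_j`: it is a connected
component of their intersection (it starts at a meeting vertex `x_k`, the two
paths stay together on condensed edges until `x_l`, and separate after `x_l`)
and the two paths enter `x_k` and exit `x_l` in different vertical orders. -/
def crossPair (i j : Fin n) (k l : Fin F.m) : Prop :=
  π.meet i j k ∧ Relation.ReflTransGen (π.linked i j) k l ∧
    (∀ l', ¬ π.linked i j l l') ∧
    ¬ ((π.traj i k.val < π.traj j k.val) ↔
        (π.traj i (l.val + 1) < π.traj j (l.val + 1)))

/-- The number of crossings of `π_i` and `π_j` occurring strictly before the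
internal vertex `x_k`. -/
noncomputable def crossBefore (i j : Fin n) (k : Fin F.m) : ℕ :=
  Set.ncard {pl : Fin F.m × Fin F.m | π.crossPair i j pl.1 pl.2 ∧ pl.2 < k}

/-- `(π_i, π_j, k)` is a defect of `π`: `i < j` and `π_i`, `π_j` meet at `x_k`
after having crossed an odd number of times. -/
def defect (i j : Fin n) (k : Fin F.m) : Prop :=
  i < j ∧ π.meet i j k ∧ Odd (π.crossBefore i j k)

/-- The number of defects of `π`. -/
noncomputable def dfct : ℕ :=
  Set.ncard {t : Fin n × Fin n × Fin F.m | π.defect t.1 t.2.1 t.2.2}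

end Raw

/-- Two raw families represent the same path family of `F` iff they differ
only in the distribution of paths among the strands of condensed edges. -/
def condRel (π σ : F.Raw) : Prop :=
  ∀ i k, π.traj i k = σ.traj i k ∨
    ∃ j l : Fin F.m, j.val ≤ k ∧ k < l.val ∧ F.cond j l = true ∧
      π.traj i k ∈ F.Iset j l ∧ σ.traj i k ∈ F.Iset j l

/-- `Π(F)`: the set (type) of covering path families of the star network `F`. -/
def PathFamily := Quot F.condRel

/-- The type of a path family. -/
noncomputable def PathFamily.typeQ (σ : F.PathFamily) : Equiv.Perm (Fin n) :=
  (Quot.out σ).ptype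

/-- The number of defects of a path family. -/
noncomputable def PathFamily.dfctQ (σ : F.PathFamily) : ℕ :=
  (Quot.out σ).dfct

end StarNetwork

/-!
Fix `i < j` and compare the levels of the two paths stage by stage. A star entered by at most one
of them cannot change their order, and no crossing ends there. Every other step leaving the
intersection ends a connected component `(x_a, …, x_v)` of it, across which the order has changed
exactly when that component is a crossing. By induction, at every stage outside the components,
path `i` is below path `j` iff an even number of crossings has been completed; at the stage just
before a meeting vertex `x_k` this is the claim.
-/

open Relation

lemma lt_iff_lt_of_notMem_Icc {α : Type*} [LinearOrder α] {lo hi a b c : α}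
    (ha : a ∈ Set.Icc lo hi) (hb : b ∈ Set.Icc lo hi) (hc : c ∉ Set.Icc lo hi) :
    a < c ↔ b < c := by
  by_cases hlo : lo ≤ c
  · have hhi : hi < c := lt_of_not_ge fun h => hc ⟨hlo, h⟩
    exact iff_of_true (ha.2.trans_lt hhi) (hb.2.trans_lt hhi)
  · have hclo := (not_le.mp hlo).le
    exact iff_of_false (not_lt.mpr (hclo.trans ha.1)) (not_lt.mpr (hclo.trans hb.1))

namespace StarNetwork

variable {n : ℕ} {F : StarNetwork n}

lemma mem_Iset_iff {v : Fin n} {p l : Fin F.m} :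
    v ∈ F.Iset p l ↔ (F.lo p ≤ v ∧ v ≤ F.hi p) ∧ (F.lo l ≤ v ∧ v ≤ F.hi l) ∧
      ∀ q, p < q → q < l → ¬ (F.lo q ≤ v ∧ v ≤ F.hi q) := by
  simp only [Iset, Finset.mem_sdiff, Finset.mem_inter, Finset.mem_Icc, Finset.mem_biUnion,
    Finset.mem_Ioo, not_exists, not_and, and_assoc]

lemma memI_val_iff {c : Fin n} {k : Fin F.m} :
    F.memI k c ↔ F.lo k ≤ c ∧ c ≤ F.hi k :=
  ⟨fun ⟨_, h⟩ => h, fun h => ⟨k.isLt, h⟩⟩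

lemma not_memI_of_mem_Iset {v : Fin n} {p l : Fin F.m} (hv : v ∈ F.Iset p l) {s : ℕ}
    (hps : p.val < s) (hsl : s < l.val) : ¬ F.memI s v :=
  fun ⟨hs, hmem⟩ => (mem_Iset_iff.mp hv).2.2 ⟨s, hs⟩ hps hsl hmem

namespace Raw

variable (π : F.Raw) {i j : Fin n}

lemma traj_ne (hij : i ≠ j) (t : ℕ) : π.traj i t ≠ π.traj j t :=
  fun h => hij (π.inj t h)

lemma traj_eq_of_mem_Iset_succ {p l : Fin F.m} (hv : π.traj i (p + 1) ∈ F.Iset p l) {t : ℕ}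
    (hpt : p.val + 1 ≤ t) (htl : t ≤ l.val) : π.traj i t = π.traj i (p + 1) := by
  induction t, hpt using Nat.le_induction with
  | base => rfl
  | succ s hps ih =>
    have hs := ih (by omega)
    rw [π.step_out i s (hs ▸ not_memI_of_mem_Iset hv (by omega) (by omega)), hs]

lemma traj_succ_eq_of_mem_Iset {p k : Fin F.m} (hpk : p < k) (hv : π.traj i k ∈ F.Iset p k) :
    π.traj i (p + 1) = π.traj i k := by
  refine Nat.decreasingInduction' (P := fun t => π.traj i t = π.traj i k) ?_ hpk rfl
  intro t htk hpt ih
  refine (π.step_out i t fun hm => ?_).symm.trans ih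
  exact not_memI_of_mem_Iset hv (by omega) htk (ih ▸ π.step_in i t hm)

lemma enters_of_mem_Iset {p l : Fin F.m} (hv : π.traj i (p + 1) ∈ F.Iset p l) :
    π.enters i p := by
  by_cases hm : F.memI p (π.traj i p)
  · exact memI_val_iff.mp hm
  · have h := (mem_Iset_iff.mp hv).1
    rwa [π.step_out i p hm] at h

lemma linked.symm {π : F.Raw} {p l : Fin F.m} (h : π.linked i j p l) : π.linked j i p l :=
  ⟨h.1, h.2.1, h.2.2.2, h.2.2.1⟩

lemma linked.traj_eq {π : F.Raw} {p l : Fin F.m} (h : π.linked i j p l) :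
    π.traj i l = π.traj i (p + 1) :=
  π.traj_eq_of_mem_Iset_succ h.2.2.1 h.1 le_rfl

lemma sameEnter.symm {π : F.Raw} {k : Fin F.m} (h : π.sameEnter i j k) : π.sameEnter j i k :=
  let ⟨hi, hj, p, hpk, hc, hpi, hpj⟩ := h
  ⟨hj, hi, p, hpk, hc, hpj, hpi⟩

lemma sameEnter_of_linked {p l : Fin F.m} (h : π.linked i j p l) : π.sameEnter i j l := by
  have hi : π.traj i l ∈ F.Iset p l := h.traj_eq.symm ▸ h.2.2.1
  have hj : π.traj j l ∈ F.Iset p l := h.symm.traj_eq.symm ▸ h.2.2.2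
  exact ⟨(mem_Iset_iff.mp hi).2.1, (mem_Iset_iff.mp hj).2.1, p, h.1, h.2.1, hi, hj⟩

lemma exists_linked_of_sameEnter {k : Fin F.m} (h : π.sameEnter i j k) :
    ∃ p < k, π.linked i j p k := by
  obtain ⟨-, -, p, hpk, hc, hi, hj⟩ := h
  exact ⟨p, hpk, hpk, hc, (π.traj_succ_eq_of_mem_Iset hpk hi).symm ▸ hi,
    (π.traj_succ_eq_of_mem_Iset hpk hj).symm ▸ hj⟩

lemma linked_rightUnique : Relator.RightUnique (π.linked i j) := by
  intro p l l' h h'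
  by_contra hne
  rcases lt_or_gt_of_ne hne with hlt | hlt
  · exact (mem_Iset_iff.mp h'.2.2.1).2.2 l h.1 hlt (mem_Iset_iff.mp h.2.2.1).2.1
  · exact (mem_Iset_iff.mp h.2.2.1).2.2 l' h'.1 hlt (mem_Iset_iff.mp h'.2.2.1).2.1

lemma le_of_linked_chain {a v : Fin F.m} (h : ReflTransGen (π.linked i j) a v) : a ≤ v := by
  induction h with
  | refl => exact le_rfl
  | tail _ hlink ih => exact ih.trans hlink.1.le

/-- Stage `t` is strictly inside a connected component of the intersection of paths `i` and `j`:
it lies on a condensed edge carrying both. -/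
def onCommonEdge (i j : Fin n) (t : ℕ) : Prop :=
  ∃ p l : Fin F.m, π.linked i j p l ∧ p.val < t ∧ t ≤ l.val

lemma onCommonEdge_of_linked_chain {a v : Fin F.m} (h : ReflTransGen (π.linked i j) a v) {t : ℕ}
    (hat : a.val < t) (htv : t ≤ v.val) : π.onCommonEdge i j t := by
  induction h with
  | refl => omega
  | @tail b c _ hbc ih =>
    rcases le_or_gt t b.val with htb | hbt
    · exact ih htb
    · exact ⟨b, c, hbc, hbt, htv⟩

lemma not_onCommonEdge_of_meet {u : Fin F.m} (hm : π.meet i j u) : ¬ π.onCommonEdge i j u := by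
  rintro ⟨p, l, hpl, hpu, hul⟩
  rcases hul.eq_or_lt with hul | hul
  · exact hm.2.2.2 (Fin.ext hul ▸ π.sameEnter_of_linked hpl)
  · have hv := π.traj_eq_of_mem_Iset_succ hpl.2.2.1 hpu hul.le ▸ hpl.2.2.1
    exact (mem_Iset_iff.mp hv).2.2 u hpu hul hm.2.1

lemma eq_of_meet_of_linked_chain {a v u : Fin F.m} (h : ReflTransGen (π.linked i j) a v)
    (hm : π.meet i j u) (hau : a ≤ u) (huv : u ≤ v) : u = a := by
  by_contra hne
  exact π.not_onCommonEdge_of_meet hm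
    (π.onCommonEdge_of_linked_chain h (show a < u from lt_of_le_of_ne hau (Ne.symm hne)) huv)

lemma exists_meet_linked_chain (hij : i ≠ j) (v : Fin F.m) (hi : π.enters i v)
    (hj : π.enters j v) : ∃ a, π.meet i j a ∧ ReflTransGen (π.linked i j) a v := by
  induction v using WellFoundedLT.induction with
  | _ v ih =>
    by_cases hs : π.sameEnter i j v
    · obtain ⟨p, hpv, hp⟩ := π.exists_linked_of_sameEnter hs
      obtain ⟨a, ha, hchain⟩ :=
        ih p hpv (π.enters_of_mem_Iset hp.2.2.1) (π.enters_of_mem_Iset hp.2.2.2)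
      exact ⟨a, ha, hchain.tail hp⟩
    · exact ⟨v, ⟨hij, hi, hj, hs⟩, .refl⟩

lemma exists_enters_of_joint {s : ℕ} (hs : ¬ π.onCommonEdge i j (s + 1))
    (hjoint : π.onCommonEdge i j s ∨ (F.memI s (π.traj i s) ∧ F.memI s (π.traj j s))) :
    ∃ v : Fin F.m, v.val = s ∧ π.enters i v ∧ π.enters j v := by
  rcases hjoint with ⟨p, l, hpl, hps, hsl⟩ | ⟨⟨hsm, hi⟩, _, hj⟩
  · rcases hsl.eq_or_lt with rfl | hsl
    · have h := π.sameEnter_of_linked hpl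
      exact ⟨l, rfl, h.1, h.2.1⟩
    · exact absurd ⟨p, l, hpl, by omega, hsl⟩ hs
  · exact ⟨⟨s, hsm⟩, rfl, hi, hj⟩

lemma traj_lt_traj_succ_iff {t : ℕ} (h : ¬ (F.memI t (π.traj i t) ∧ F.memI t (π.traj j t))) :
    π.traj i (t + 1) < π.traj j (t + 1) ↔ π.traj i t < π.traj j t := by
  by_cases hi : F.memI t (π.traj i t) <;> by_cases hj : F.memI t (π.traj j t)
  · exact absurd ⟨hi, hj⟩ h
  · obtain ⟨ht, hi'⟩ := π.step_in i t hi
    rw [π.step_out j t hj]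
    exact lt_iff_lt_of_notMem_Icc hi' hi.2 fun hc => hj ⟨ht, hc⟩
  · obtain ⟨ht, hj'⟩ := π.step_in j t hj
    rw [π.step_out i t hi]
    exact lt_iff_lt_of_notMem_Icc (α := (Fin n)ᵒᵈ) ⟨hj'.2, hj'.1⟩ ⟨hj.2.2, hj.2.1⟩
      fun hc => hi ⟨ht, hc.2, hc.1⟩
  · rw [π.step_out i t hi, π.step_out j t hj]

lemma eq_of_crossPair_of_linked_chain {a v a' b' : Fin F.m} (hm : π.meet i j a)
    (hchain : ReflTransGen (π.linked i j) a v) (hterm : ∀ l, ¬ π.linked i j v l)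
    (hcp : π.crossPair i j a' b') (hab' : a ≤ b') (hb'v : b' ≤ v) : a' = a ∧ b' = v := by
  have haa' : a ≤ a' := le_of_not_gt fun h =>
    π.not_onCommonEdge_of_meet hm (π.onCommonEdge_of_linked_chain hcp.2.1 h hab')
  obtain rfl := π.eq_of_meet_of_linked_chain hchain hcp.1 haa'
    ((π.le_of_linked_chain hcp.2.1).trans hb'v)
  refine ⟨rfl, ?_⟩
  rcases ReflTransGen.total_of_right_unique π.linked_rightUnique hcp.2.1 hchain with h | h
  · exact ((reflTransGen_iff_eq hcp.2.2.1).mp h).symm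
  · exact (reflTransGen_iff_eq hterm).mp h

noncomputable def crossCount (i j : Fin n) (t : ℕ) : ℕ :=
  Set.ncard {pl : Fin F.m × Fin F.m | π.crossPair i j pl.1 pl.2 ∧ pl.2.val < t}

lemma crossBefore_eq_crossCount (k : Fin F.m) : π.crossBefore i j k = π.crossCount i j k := rfl

lemma crossCount_add {a t : ℕ} (hat : a ≤ t) :
    π.crossCount i j t = π.crossCount i j a + Set.ncard
      {pl : Fin F.m × Fin F.m | π.crossPair i j pl.1 pl.2 ∧ a ≤ pl.2.val ∧ pl.2.val < t} := by
  rw [crossCount, crossCount, ← Set.ncard_union_eq]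
  · congr 1
    ext pl
    constructor
    · rintro ⟨hc, hlt⟩
      exact (lt_or_ge pl.2.val a).imp (fun h => ⟨hc, h⟩) fun h => ⟨hc, h, hlt⟩
    · rintro (⟨hc, h⟩ | ⟨hc, -, h⟩) <;> exact ⟨hc, by omega⟩
  · exact Set.disjoint_left.mpr fun pl h h' => by have := h.2; have := h'.2.1; omega

lemma crossCount_succ_of_not_joint {s : ℕ} (hs : ¬ π.onCommonEdge i j s)
    (hjoint : ¬ (F.memI s (π.traj i s) ∧ F.memI s (π.traj j s))) :
    π.crossCount i j (s + 1) = π.crossCount i j s := by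
  have hend : ∀ a b, π.crossPair i j a b → b.val ≠ s := by
    rintro a b hab rfl
    rcases hab.2.1.cases_tail with rfl | ⟨c, -, hcb⟩
    · exact hjoint ⟨memI_val_iff.mpr hab.1.2.1, memI_val_iff.mpr hab.1.2.2.1⟩
    · exact hs ⟨c, b, hcb, hcb.1, le_rfl⟩
  rw [π.crossCount_add (Nat.le_succ s), add_eq_left, Set.ncard_eq_zero]
  exact Set.eq_empty_of_forall_notMem fun pl ⟨hcp, h, h'⟩ => hend _ _ hcp (by omega)

open Classical in
lemma crossCount_succ_of_linked_chain {a v : Fin F.m} (hm : π.meet i j a)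
    (hchain : ReflTransGen (π.linked i j) a v) (hterm : ∀ l, ¬ π.linked i j v l) :
    π.crossCount i j (v + 1) = π.crossCount i j a + if π.crossPair i j a v then 1 else 0 := by
  have hav := π.le_of_linked_chain hchain
  rw [π.crossCount_add (show a.val ≤ v + 1 by omega)]
  congr 1
  have hsub : ∀ pl ∈ {pl : Fin F.m × Fin F.m |
      π.crossPair i j pl.1 pl.2 ∧ a.val ≤ pl.2.val ∧ pl.2.val < v + 1}, pl = (a, v) :=
    fun pl ⟨hcp, h, h'⟩ => Prod.ext_iff.mpr
      (π.eq_of_crossPair_of_linked_chain hm hchain hterm hcp h (Nat.lt_succ_iff.mp h'))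
  split_ifs with hcross
  · exact Set.ncard_eq_one.mpr ⟨(a, v), Set.eq_singleton_iff_unique_mem.mpr
      ⟨⟨hcross, hav, Nat.lt_succ_self _⟩, hsub⟩⟩
  · exact (Set.ncard_eq_zero).mpr (Set.eq_empty_of_forall_notMem fun pl hpl =>
      hcross (by obtain rfl := hsub pl hpl; exact hpl.1))

theorem even_crossCount_iff (hij : i < j) {t : ℕ} (ht : ¬ π.onCommonEdge i j t) :
    Even (π.crossCount i j t) ↔ π.traj i t < π.traj j t := by
  induction t using Nat.strong_induction_on with
  | _ t ih =>
    rcases t with _ | s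
    · simp [crossCount, π.init, hij]
    by_cases hjoint : π.onCommonEdge i j s ∨ (F.memI s (π.traj i s) ∧ F.memI s (π.traj j s))
    · obtain ⟨v, rfl, hi, hj⟩ := π.exists_enters_of_joint ht hjoint
      obtain ⟨a, hm, hchain⟩ := π.exists_meet_linked_chain hij.ne v hi hj
      have hterm : ∀ l, ¬ π.linked i j v l := fun l hl => ht ⟨v, l, hl, Nat.lt_succ_self _, hl.1⟩
      have iha := ih a (Nat.lt_succ_of_le (π.le_of_linked_chain hchain))
        (π.not_onCommonEdge_of_meet hm)
      have hcross : π.crossPair i j a v ↔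
          ¬ (π.traj i a < π.traj j a ↔ π.traj i (v + 1) < π.traj j (v + 1)) :=
        ⟨fun h => h.2.2.2, fun h => ⟨hm, hchain, hterm, h⟩⟩
      rw [π.crossCount_succ_of_linked_chain hm hchain hterm]
      split_ifs with h
      · rw [Nat.even_add_one, iha]
        tauto
      · rw [add_zero, iha]
        tauto
    · rw [not_or] at hjoint
      rw [π.crossCount_succ_of_not_joint hjoint.1 hjoint.2, π.traj_lt_traj_succ_iff hjoint.2]
      exact ih s (Nat.lt_succ_self s) hjoint.1

theorem odd_crossBefore_iff (hij : i < j) {k : Fin F.m} (hm : π.meet i j k) :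
    Odd (π.crossBefore i j k) ↔ π.traj j k < π.traj i k := by
  rw [crossBefore_eq_crossCount, ← Nat.not_even_iff_odd,
    π.even_crossCount_iff hij (π.not_onCommonEdge_of_meet hm), not_lt]
  exact (π.traj_ne hij.ne' k).le_iff_lt

end Raw

end StarNetwork

/-- **Lemma 3.3** (Parisi–Skandera–Spahiu–Wang).  For a star network
`F ∈ ⊚net n` and a covering path family `π ∈ Π(F)`, the triple `(π_i, π_j, k)`
is a defect if and only if `i < j` and `π_j ≺_k π_i`. -/
theorem defect_iff_enters_lower {n : ℕ} (F : StarNetwork n) (π : F.Raw)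
    (i j : Fin n) (k : Fin F.m) :
    π.defect i j k ↔ i < j ∧ π.precAt j i k := by
  constructor
  · rintro ⟨hij, hm, hodd⟩
    have ⟨_, hi, hj, hsame⟩ := hm
    exact ⟨hij, hj, hi, fun h => hsame h.symm, (π.odd_crossBefore_iff hij hm).mp hodd⟩
  · rintro ⟨hij, hj, hi, hsame, hlt⟩
    have hm : π.meet i j k := ⟨hij.ne, hi, hj, fun h => hsame h.symm⟩
    exact ⟨hij, hm, (π.odd_crossBefore_iff hij hm).mpr hlt⟩
end

section
/- Fix a star network F of order n with internal vertices x₁,…,x_m, a permutation v ∈ S_n, a covering path family π ∈ Π_v(F), and an index k ∈ [m]. Then there exists a covering path family σ ∈ Π_v(F) such that: (1) for each p > k, {(i,j) | (σ_i, σ_j, p) is a defect} = {(i,j) | (π_i, π_j, p) is a defect}; and (2) σ has no defects at x_k. -/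
/-! ### Auxiliary development for Proposition 4.8 -/

namespace StarNetwork

variable {n : ℕ} {F : StarNetwork n}

lemma aux_memI_iff {q : ℕ} {c : Fin n} (hq : q < F.m) :
    F.memI q c ↔ (F.lo ⟨q, hq⟩ ≤ c ∧ c ≤ F.hi ⟨q, hq⟩) :=
  ⟨fun ⟨_, h2⟩ => h2, fun h => ⟨hq, h⟩⟩

lemma aux_memI_fin {p : Fin F.m} {c : Fin n} :
    F.memI p.val c ↔ (F.lo p ≤ c ∧ c ≤ F.hi p) := aux_memI_iff p.isLt

lemma aux_mem_Iset_iff {a b : Fin F.m} {c : Fin n} :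
    c ∈ F.Iset a b ↔ (((F.lo a ≤ c ∧ c ≤ F.hi a) ∧ (F.lo b ≤ c ∧ c ≤ F.hi b)) ∧
      ∀ p, a < p → p < b → F.lo p ≤ c → ¬ c ≤ F.hi p) := by
  simp only [Iset, Finset.mem_sdiff, Finset.mem_inter, Finset.mem_Icc, Finset.mem_biUnion,
    Finset.mem_Ioo, not_exists, not_and]
  constructor
  · rintro ⟨h12, h3⟩
    exact ⟨h12, fun p hp1 hp2 hc1 hc2 => h3 p ⟨hp1, hp2⟩ hc1 hc2⟩
  · rintro ⟨h12, h3⟩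
    exact ⟨h12, fun p hp hc1 hc2 => h3 p hp.1 hp.2 hc1 hc2⟩

lemma aux_notMemI_of_Iset {a b : Fin F.m} {q : ℕ} {c : Fin n}
    (h : c ∈ F.Iset a b) (h1 : a.val < q) (h2 : q < b.val) : ¬ F.memI q c := by
  rintro ⟨hq, hc1, hc2⟩
  exact (aux_mem_Iset_iff.mp h).2 ⟨q, hq⟩ h1 h2 hc1 hc2

namespace Raw

variable (π : F.Raw)

/-- Going forward along a condensed edge, the level is constant. -/
lemma aux_stepB {x : Fin n} {a b : Fin F.m} {q : ℕ}
    (h : π.traj x q ∈ F.Iset a b) (h1 : a.val < q) (h2 : q < b.val) :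
    π.traj x (q + 1) = π.traj x q :=
  π.step_out x q (aux_notMemI_of_Iset h h1 h2)

lemma aux_stepA {x : Fin n} {a b : Fin F.m} {q : ℕ}
    (h : π.traj x (q + 1) ∈ F.Iset a b) (h1 : a.val < q) (h2 : q < b.val) :
    π.traj x q = π.traj x (q + 1) := by
  by_cases hm : F.memI q (π.traj x q)
  · exact absurd (π.step_in x q hm) (aux_notMemI_of_Iset h h1 h2)
  · exact (π.step_out x q hm).symm

/-- Forward constancy on a condensed edge. -/
lemma aux_const_fwd {x : Fin n} {a b : Fin F.m}
    (h : π.traj x (a.val + 1) ∈ F.Iset a b) :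
    ∀ t, a.val + 1 + t ≤ b.val → π.traj x (a.val + 1 + t) = π.traj x (a.val + 1) := by
  intro t
  induction t with
  | zero => intro _; rfl
  | succ t ih =>
    intro hle
    have ht := ih (by omega)
    have hmem : π.traj x (a.val + 1 + t) ∈ F.Iset a b := by rw [ht]; exact h
    have : π.traj x (a.val + 1 + t + 1) = π.traj x (a.val + 1 + t) :=
      π.aux_stepB hmem (by omega) (by omega)
    rw [show a.val + 1 + (t + 1) = a.val + 1 + t + 1 by omega, this, ht]

lemma aux_traj_const {x : Fin n} {a b : Fin F.m} {s : ℕ}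
    (h : π.traj x (a.val + 1) ∈ F.Iset a b) (h1 : a.val < s) (h2 : s ≤ b.val) :
    π.traj x s = π.traj x (a.val + 1) := by
  have : s = a.val + 1 + (s - (a.val + 1)) := by omega
  rw [this]; exact π.aux_const_fwd h _ (by omega)

/-- Backward constancy: membership at a later stage propagates back to `a+1`. -/
lemma aux_Iset_backward {x : Fin n} {a b : Fin F.m} :
    ∀ t {s : ℕ}, s = a.val + 1 + t → s ≤ b.val → π.traj x s ∈ F.Iset a b →
    π.traj x (a.val + 1) ∈ F.Iset a b ∧ π.traj x s = π.traj x (a.val + 1) := by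
  intro t
  induction t with
  | zero => intro s hs _ h; subst hs; exact ⟨h, rfl⟩
  | succ t ih =>
    intro s hs hsb h
    subst hs
    have e1 : a.val + 1 + (t + 1) = (a.val + 1 + t) + 1 := by omega
    rw [e1] at h hsb ⊢
    have hstep : π.traj x (a.val + 1 + t) = π.traj x (a.val + 1 + t + 1) :=
      π.aux_stepA h (by omega) (by omega)
    have h2 := ih rfl (by omega) (by rw [hstep]; exact h)
    exact ⟨h2.1, by rw [← hstep]; exact h2.2⟩

lemma aux_Iset_bwd {x : Fin n} {a b : Fin F.m} {s : ℕ}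
    (h : π.traj x s ∈ F.Iset a b) (h1 : a.val < s) (h2 : s ≤ b.val) :
    π.traj x (a.val + 1) ∈ F.Iset a b ∧ π.traj x s = π.traj x (a.val + 1) :=
  π.aux_Iset_backward (s - (a.val + 1)) (by omega) h2 h

variable {i j : Fin n}

/-- Both paths are inside star `q`'s interval at stage `q`. -/
def auxBothIn (π : F.Raw) (i j : Fin n) (q : ℕ) : Prop :=
  F.memI q (π.traj i q) ∧ F.memI q (π.traj j q)

/-- The two paths are not travelling together on a condensed edge at stage `q`. -/
def auxApart (π : F.Raw) (i j : Fin n) (q : ℕ) : Prop :=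
  ∀ a b : Fin F.m, π.linked i j a b → ¬(a.val < q ∧ q ≤ b.val)

/-- Crossings before stage `q`. -/
noncomputable def auxN (π : F.Raw) (i j : Fin n) (q : ℕ) : ℕ :=
  Set.ncard {pl : Fin F.m × Fin F.m | π.crossPair i j pl.1 pl.2 ∧ pl.2.val < q}

lemma aux_crossBefore_eq (π : F.Raw) (i j : Fin n) (k : Fin F.m) :
    π.crossBefore i j k = auxN π i j k.val := rfl

lemma aux_enters_of_Iset_succ {x : Fin n} {a b : Fin F.m}
    (h : π.traj x (a.val + 1) ∈ F.Iset a b) : π.enters x a := by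
  by_cases hm : F.memI a.val (π.traj x a.val)
  · exact aux_memI_fin.mp hm
  · have he := π.step_out x a.val hm
    exfalso
    exact hm (aux_memI_fin.mpr (by rw [← he]; exact ((aux_mem_Iset_iff.mp h).1).1))

lemma aux_linked_sameEnter (h : π.linked i j a b) : π.sameEnter i j b := by
  obtain ⟨hab, hc, hmi, hmj⟩ := h
  have hab' : a.val < b.val := hab
  have hi' : π.traj i b.val ∈ F.Iset a b := by
    rw [π.aux_traj_const hmi (by omega) (le_refl _)]; exact hmi
  have hj' : π.traj j b.val ∈ F.Iset a b := by
    rw [π.aux_traj_const hmj (by omega) (le_refl _)]; exact hmj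
  exact ⟨(aux_mem_Iset_iff.mp hi').1.2, (aux_mem_Iset_iff.mp hj').1.2,
    a, hab, hc, hi', hj'⟩

lemma aux_apart_of_meet {p : Fin F.m} (h : π.meet i j p) : auxApart π i j p.val := by
  rintro a b hl ⟨h1, h2⟩
  obtain ⟨hne, hei, hej, hns⟩ := h
  have hi' : π.traj i p.val ∈ F.Iset a b := by
    rw [π.aux_traj_const hl.2.2.1 h1 h2]; exact hl.2.2.1
  have hj' : π.traj j p.val ∈ F.Iset a b := by
    rw [π.aux_traj_const hl.2.2.2 h1 h2]; exact hl.2.2.2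
  rcases lt_or_eq_of_le h2 with h2' | h2'
  · exact (aux_mem_Iset_iff.mp hi').2 p h1 h2' hei.1 hei.2
  · have hpb : p = b := Fin.ext h2'
    exact hns (hpb ▸ π.aux_linked_sameEnter hl)

lemma aux_linked_fun (h : π.linked i j a b) (h' : π.linked i j a b') : b = b' := by
  rcases lt_trichotomy b b' with hlt | he | hlt
  · exact absurd ((aux_mem_Iset_iff.mp h.2.2.1).1.2.1)
      (fun hle => (aux_mem_Iset_iff.mp h'.2.2.1).2 b h.1 hlt hle
        ((aux_mem_Iset_iff.mp h.2.2.1).1.2.2))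
  · exact he
  · exact absurd ((aux_mem_Iset_iff.mp h'.2.2.1).1.2.1)
      (fun hle => (aux_mem_Iset_iff.mp h.2.2.1).2 b' h'.1 hlt hle
        ((aux_mem_Iset_iff.mp h'.2.2.1).1.2.2))

lemma aux_rtg_le {a b : Fin F.m} (h : Relation.ReflTransGen (π.linked i j) a b) :
    a ≤ b := by
  induction h with
  | refl => exact le_refl _
  | tail _ hstep ih => exact le_trans ih (le_of_lt hstep.1)

lemma aux_rtg_cover {a b : Fin F.m} (h : Relation.ReflTransGen (π.linked i j) a b) :
    ∀ s : ℕ, a.val < s → s ≤ b.val →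
      ∃ c d : Fin F.m, π.linked i j c d ∧ c.val < s ∧ s ≤ d.val := by
  induction h with
  | refl => intro s h1 h2; omega
  | @tail b' c' hab hbc ih =>
    intro s h1 h2
    by_cases hs : s ≤ b'.val
    · exact ih s h1 hs
    · exact ⟨b', c', hbc, by omega, h2⟩

lemma aux_terminal_unique {a y z : Fin F.m}
    (hy : Relation.ReflTransGen (π.linked i j) a y)
    (ty : ∀ w, ¬ π.linked i j y w) (tz : ∀ w, ¬ π.linked i j z w) :
    ∀ (hz : Relation.ReflTransGen (π.linked i j) a z), y = z := by
  induction hy using Relation.ReflTransGen.head_induction_on with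
  | refl =>
    intro hz
    rcases (Relation.ReflTransGen.cases_head hz) with he | ⟨w, hw, _⟩
    · exact he
    · exact absurd hw (ty w)
  | @head a' c' hac hcy ih =>
    intro hz
    rcases (Relation.ReflTransGen.cases_head hz) with he | ⟨w, hw, hwz⟩
    · exact absurd hac (he ▸ tz c')
    · exact ih ((π.aux_linked_fun hw hac) ▸ hwz)

/-- Every condensed travelling pair can be traced back to a meeting vertex. -/
lemma aux_backtrace (hne : i ≠ j) :
    ∀ N (a b : Fin F.m), a.val < N → π.linked i j a b →
      ∃ k', π.meet i j k' ∧ Relation.ReflTransGen (π.linked i j) k' a := by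
  intro N
  induction N with
  | zero => intro a b h; omega
  | succ N ih =>
    intro a b hN hl
    have hei : π.enters i a := π.aux_enters_of_Iset_succ hl.2.2.1
    have hej : π.enters j a := π.aux_enters_of_Iset_succ hl.2.2.2
    by_cases hs : π.sameEnter i j a
    · obtain ⟨_, _, p, hpa, hcp, hip, hjp⟩ := hs
      have hpa' : p.val < a.val := hpa
      have hip' := π.aux_Iset_bwd hip hpa' (le_refl _)
      have hjp' := π.aux_Iset_bwd hjp hpa' (le_refl _)
      have hlpa : π.linked i j p a := ⟨hpa, hcp, hip'.1, hjp'.1⟩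
      obtain ⟨k', hm, hr⟩ := ih p a (by omega) hlpa
      exact ⟨k', hm, hr.tail hlpa⟩
    · exact ⟨a, ⟨hne, hei, hej, hs⟩, Relation.ReflTransGen.refl⟩

lemma aux_no_meet_mid {c d : Fin F.m} (hl : π.linked i j c d) (w : Fin F.m)
    (h1 : c.val < w.val) (h2 : w.val ≤ d.val) : ¬ π.meet i j w := by
  intro hm
  rcases lt_or_eq_of_le h2 with h2' | h2'
  · have hi' : π.traj i w.val ∈ F.Iset c d := by
      rw [π.aux_traj_const hl.2.2.1 h1 h2]; exact hl.2.2.1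
    exact (aux_mem_Iset_iff.mp hi').2 w h1 h2' hm.2.1.1 hm.2.1.2
  · have hwd : w = d := Fin.ext h2'
    exact hm.2.2.2 (hwd ▸ π.aux_linked_sameEnter hl)

lemma aux_no_meet_on_chain {k' b : Fin F.m}
    (hr : Relation.ReflTransGen (π.linked i j) k' b) (w : Fin F.m)
    (h1 : k'.val < w.val) (h2 : w.val ≤ b.val) : ¬ π.meet i j w := by
  obtain ⟨c, d, hl, hc1, hc2⟩ := π.aux_rtg_cover hr w.val h1 h2
  exact π.aux_no_meet_mid hl w hc1 hc2

/-- If the two paths do not both enter star `q`, their vertical order is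
preserved across stage `q`. -/
lemma aux_orderStep (hne : i ≠ j) (q : ℕ) (hb : ¬ auxBothIn π i j q) :
    (π.traj i (q + 1) < π.traj j (q + 1)) ↔ (π.traj i q < π.traj j q) := by
  by_cases hmi : F.memI q (π.traj i q) <;> by_cases hmj : F.memI q (π.traj j q)
  · exact absurd ⟨hmi, hmj⟩ hb
  · have hj' := π.step_out j q hmj
    obtain ⟨_, h1', h2'⟩ := π.step_in i q hmi
    obtain ⟨hq, h1, h2⟩ := hmi
    rw [hj']
    have hd : ¬(F.lo ⟨q, hq⟩ ≤ π.traj j q ∧ π.traj j q ≤ F.hi ⟨q, hq⟩) :=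
      fun hc => hmj ⟨hq, hc⟩
    rw [Fin.lt_def, Fin.lt_def]
    rw [Fin.le_def] at h1 h2 h1' h2'
    rcases not_and_or.mp hd with hd' | hd' <;> rw [Fin.le_def] at hd' <;> push_neg at hd' <;> omega
  · have hi' := π.step_out i q hmi
    obtain ⟨_, h1', h2'⟩ := π.step_in j q hmj
    obtain ⟨hq, h1, h2⟩ := hmj
    rw [hi']
    have hd : ¬(F.lo ⟨q, hq⟩ ≤ π.traj i q ∧ π.traj i q ≤ F.hi ⟨q, hq⟩) :=
      fun hc => hmi ⟨hq, hc⟩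
    rw [Fin.lt_def, Fin.lt_def]
    rw [Fin.le_def] at h1 h2 h1' h2'
    rcases not_and_or.mp hd with hd' | hd' <;> rw [Fin.le_def] at hd' <;> push_neg at hd' <;> omega
  · rw [π.step_out i q hmi, π.step_out j q hmj]

lemma aux_orderPreserve (hne : i ≠ j) :
    ∀ q : ℕ, (∀ q' < q, ¬ auxBothIn π i j q') →
      ((π.traj i q < π.traj j q) ↔ i < j) := by
  intro q
  induction q with
  | zero => intro _; rw [π.init i, π.init j]
  | succ q ih =>
    intro h
    rw [π.aux_orderStep hne q (h q (by omega))]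
    exact ih (fun q' hq' => h q' (by omega))

set_option maxHeartbeats 1000000 in
/-- **Key parity lemma**: while the two paths are apart, the number of
crossings so far is odd iff their vertical order has been reversed. -/
lemma aux_parity (hne : i ≠ j) :
    ∀ q : ℕ, auxApart π i j q →
      (Odd (auxN π i j q) ↔ ¬((π.traj i q < π.traj j q) ↔ i < j)) := by
  intro q
  induction q using Nat.strong_induction_on with
  | _ q IH =>
  cases q with
  | zero =>
    intro _
    have h0 : auxN π i j 0 = 0 := by
      unfold auxN
      have : {pl : Fin F.m × Fin F.m | π.crossPair i j pl.1 pl.2 ∧ pl.2.val < 0} = ∅ := by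
        ext pl; simp
      rw [this]; exact Set.ncard_empty _
    rw [h0, π.init i, π.init j]
    simp [Nat.odd_iff]
  | succ q =>
    intro hap
    by_cases hapq : auxApart π i j q
    · by_cases hb : auxBothIn π i j q
      · -- the paths meet at star `q`; a (possibly trivial) crossing may end here
        have hq : q < F.m := hb.1.1
        set Q : Fin F.m := ⟨q, hq⟩ with hQdef
        have henti : π.enters i Q := aux_memI_fin.mp hb.1
        have hentj : π.enters j Q := aux_memI_fin.mp hb.2
        have hns : ¬ π.sameEnter i j Q := by
          rintro ⟨_, _, p, hpQ, hcp, hip, hjp⟩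
          have hpQ' : p.val < q := hpQ
          have hip' := π.aux_Iset_bwd hip hpQ' (le_refl _)
          have hjp' := π.aux_Iset_bwd hjp hpQ' (le_refl _)
          exact hapq p Q ⟨hpQ, hcp, hip'.1, hjp'.1⟩ ⟨hpQ', le_refl _⟩
        have hmeet : π.meet i j Q := ⟨hne, henti, hentj, hns⟩
        have hterm : ∀ d, ¬ π.linked i j Q d := fun d hd =>
          hap Q d hd ⟨Nat.lt_succ_self q, by have h' : q < d.val := hd.1; omega⟩
        have hsplit : ∀ pl : Fin F.m × Fin F.m,
            (π.crossPair i j pl.1 pl.2 ∧ pl.2.val < q + 1) ↔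
            ((π.crossPair i j pl.1 pl.2 ∧ pl.2.val < q) ∨
              (¬((π.traj i q < π.traj j q) ↔ (π.traj i (q+1) < π.traj j (q+1)))
                ∧ pl = (Q, Q))) := by
          intro pl
          constructor
          · rintro ⟨hc, hlt⟩
            by_cases h2 : pl.2.val < q
            · exact Or.inl ⟨hc, h2⟩
            · have h2' : pl.2.val = q := by omega
              have h1le : pl.1 ≤ pl.2 := π.aux_rtg_le hc.2.1
              rcases eq_or_lt_of_le h1le with h1e | h1l
              · have hpl2 : pl.2 = Q := Fin.ext h2'
                have hpl1 : pl.1 = Q := by rw [h1e, hpl2]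
                right
                refine ⟨?_, Prod.ext hpl1 hpl2⟩
                have := hc.2.2.2
                rw [hpl1, hpl2] at this
                exact this
              · exfalso
                obtain ⟨cc, dd, hcd, hc1, hc2⟩ := π.aux_rtg_cover hc.2.1 q
                  (by have : pl.1.val < pl.2.val := h1l; omega) (by omega)
                exact hapq cc dd hcd ⟨hc1, hc2⟩
          · rintro (⟨hc, hlt⟩ | ⟨hflip, hpl⟩)
            · exact ⟨hc, by omega⟩
            · rw [hpl]
              exact ⟨⟨hmeet, Relation.ReflTransGen.refl, hterm, hflip⟩, Nat.lt_succ_self q⟩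
        by_cases hflip : ¬((π.traj i q < π.traj j q) ↔ (π.traj i (q+1) < π.traj j (q+1)))
        · have hnm : (Q, Q) ∉ {pl : Fin F.m × Fin F.m |
              π.crossPair i j pl.1 pl.2 ∧ pl.2.val < q} := by
            intro hmem
            have := hmem.2
            simp only [hQdef] at this
            omega
          have hN : auxN π i j (q+1) = auxN π i j q + 1 := by
            unfold auxN
            rw [show {pl : Fin F.m × Fin F.m | π.crossPair i j pl.1 pl.2 ∧ pl.2.val < q + 1}
              = insert (Q, Q) {pl : Fin F.m × Fin F.m |
                  π.crossPair i j pl.1 pl.2 ∧ pl.2.val < q} from by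
              ext pl
              simp only [Set.mem_setOf_eq, Set.mem_insert_iff]
              rw [hsplit pl]
              tauto]
            exact Set.ncard_insert_of_notMem hnm (Set.toFinite _)
          rw [hN, Nat.odd_add_one, IH q (Nat.lt_succ_self q) hapq]
          tauto
        · have hN : auxN π i j (q+1) = auxN π i j q := by
            unfold auxN
            congr 1
            ext pl
            simp only [Set.mem_setOf_eq]
            rw [hsplit pl]
            tauto
          rw [hN, IH q (Nat.lt_succ_self q) hapq]
          rw [not_not] at hflip
          tauto
      · -- no interaction at star q
        have horder := π.aux_orderStep hne q hb
        have hN : auxN π i j (q+1) = auxN π i j q := by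
          unfold auxN
          congr 1
          ext pl
          simp only [Set.mem_setOf_eq]
          constructor
          · rintro ⟨hc, hlt⟩
            refine ⟨hc, ?_⟩
            by_contra h2
            have h2' : pl.2.val = q := by omega
            have h1le : pl.1 ≤ pl.2 := π.aux_rtg_le hc.2.1
            rcases eq_or_lt_of_le h1le with h1e | h1l
            · have hpl1 : pl.1.val = q := by rw [h1e]; exact h2'
              have hm := hc.1
              exact hb ⟨hpl1 ▸ ⟨pl.1.isLt, hm.2.1.1, hm.2.1.2⟩,
                hpl1 ▸ ⟨pl.1.isLt, hm.2.2.1.1, hm.2.2.1.2⟩⟩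
            · obtain ⟨cc, dd, hcd, hc1, hc2⟩ := π.aux_rtg_cover hc.2.1 q
                (by have : pl.1.val < pl.2.val := h1l; omega) (by omega)
              exact hapq cc dd hcd ⟨hc1, hc2⟩
          · rintro ⟨hc, hlt⟩
            exact ⟨hc, by omega⟩
        rw [hN, IH q (Nat.lt_succ_self q) hapq, horder]
    · -- the paths are on a condensed edge ending exactly at star q
      have hex : ∃ a b : Fin F.m, π.linked i j a b ∧ a.val < q ∧ q ≤ b.val := by
        unfold auxApart at hapq
        push_neg at hapq
        obtain ⟨a, b, h1, h2⟩ := hapq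
        exact ⟨a, b, h1, h2⟩
      obtain ⟨a, b, hl, hq1, hq2⟩ := hex
      have hbq : b.val = q := by
        by_contra h
        exact hap a b hl ⟨by omega, by omega⟩
      have hterm : ∀ d, ¬ π.linked i j b d := fun d hd =>
        hap b d hd ⟨by omega, by have h' : b.val < d.val := hd.1; omega⟩
      obtain ⟨k', hmeet, hrtg⟩ := π.aux_backtrace hne (a.val + 1) a b (Nat.lt_succ_self _) hl
      have hrtgb : Relation.ReflTransGen (π.linked i j) k' b := hrtg.tail hl
      have hapk := π.aux_apart_of_meet hmeet
      have hk'a : k'.val ≤ a.val := π.aux_rtg_le hrtg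
      rw [show q + 1 = b.val + 1 by omega]
      have hsplit : ∀ pl : Fin F.m × Fin F.m,
          (π.crossPair i j pl.1 pl.2 ∧ pl.2.val < b.val + 1) ↔
          ((π.crossPair i j pl.1 pl.2 ∧ pl.2.val < k'.val) ∨
            (¬((π.traj i k'.val < π.traj j k'.val) ↔
                (π.traj i (b.val + 1) < π.traj j (b.val + 1))) ∧ pl = (k', b))) := by
        intro pl
        constructor
        · rintro ⟨hc, hlt⟩
          by_cases h2 : pl.2.val < k'.val
          · exact Or.inl ⟨hc, h2⟩
          · have hpl1 : pl.1 = k' := by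
              rcases lt_trichotomy pl.1.val k'.val with h1 | h1 | h1
              · exfalso
                obtain ⟨cc, dd, hcd, hc1, hc2⟩ := π.aux_rtg_cover hc.2.1 k'.val h1 (by omega)
                exact hapk cc dd hcd ⟨hc1, hc2⟩
              · exact Fin.ext h1
              · exfalso
                have h1le : pl.1.val ≤ pl.2.val := π.aux_rtg_le hc.2.1
                exact π.aux_no_meet_on_chain hrtgb pl.1 h1 (by omega) hc.1
            have hpl2 : pl.2 = b :=
              π.aux_terminal_unique (hpl1 ▸ hc.2.1) hc.2.2.1 hterm hrtgb
            right
            refine ⟨?_, Prod.ext hpl1 hpl2⟩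
            have := hc.2.2.2
            rw [hpl1, hpl2] at this
            exact this
        · rintro (⟨hc, hlt⟩ | ⟨hflip, hpl⟩)
          · exact ⟨hc, by omega⟩
          · rw [hpl]
            exact ⟨⟨hmeet, hrtgb, hterm, hflip⟩, Nat.lt_succ_self _⟩
      have hIH := IH k'.val (by omega) hapk
      by_cases hflip : ¬((π.traj i k'.val < π.traj j k'.val) ↔
          (π.traj i (b.val + 1) < π.traj j (b.val + 1)))
      · have hnm : (k', b) ∉ {pl : Fin F.m × Fin F.m |
            π.crossPair i j pl.1 pl.2 ∧ pl.2.val < k'.val} := by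
          intro hmem
          have := hmem.2
          simp only at this
          omega
        have hN : auxN π i j (b.val + 1) = auxN π i j k'.val + 1 := by
          unfold auxN
          rw [show {pl : Fin F.m × Fin F.m | π.crossPair i j pl.1 pl.2 ∧ pl.2.val < b.val + 1}
            = insert (k', b) {pl : Fin F.m × Fin F.m |
                π.crossPair i j pl.1 pl.2 ∧ pl.2.val < k'.val} from by
            ext pl
            simp only [Set.mem_setOf_eq, Set.mem_insert_iff]
            rw [hsplit pl]
            tauto]
          exact Set.ncard_insert_of_notMem hnm (Set.toFinite _)
        rw [hN, Nat.odd_add_one, hIH]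
        tauto
      · have hN : auxN π i j (b.val + 1) = auxN π i j k'.val := by
          unfold auxN
          congr 1
          ext pl
          simp only [Set.mem_setOf_eq]
          rw [hsplit pl]
          tauto
        rw [hN, hIH]
        rw [not_not] at hflip
        tauto

/-- Characterisation of defects: the paths meet in reversed vertical order. -/
lemma aux_defect_iff (p : Fin F.m) :
    π.defect i j p ↔ (i < j ∧ π.meet i j p ∧ π.traj j p.val < π.traj i p.val) := by
  constructor
  · rintro ⟨hij, hm, hodd⟩
    refine ⟨hij, hm, ?_⟩
    have hne : i ≠ j := hm.1
    rw [aux_crossBefore_eq] at hodd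
    have hpar := (π.aux_parity hne p.val (π.aux_apart_of_meet hm)).mp hodd
    have hne' : π.traj i p.val ≠ π.traj j p.val := fun h => hne (π.inj p.val h)
    have hnl : ¬ (π.traj i p.val < π.traj j p.val) := by tauto
    exact lt_of_le_of_ne (not_lt.mp hnl) hne'.symm
  · rintro ⟨hij, hm, hlt⟩
    refine ⟨hij, hm, ?_⟩
    rw [aux_crossBefore_eq]
    refine (π.aux_parity hm.1 p.val (π.aux_apart_of_meet hm)).mpr ?_
    intro hiff
    exact lt_asymm hlt (hiff.mpr hij)

lemma aux_meet_congr (σ : F.Raw) {p : Fin F.m}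
    (h1 : σ.traj i p.val = π.traj i p.val) (h2 : σ.traj j p.val = π.traj j p.val) :
    σ.meet i j p ↔ π.meet i j p := by
  unfold meet sameEnter enters
  rw [h1, h2]

end Raw

/-- The trajectory family obtained by swapping paths `i` and `j` on
stages `A+1, …, K`. -/
def auxSwapTraj (π : F.Raw) (i j : Fin n) (A K : ℕ) (x : Fin n) (q : ℕ) : Fin n :=
  if A < q ∧ q ≤ K then π.traj (Equiv.swap i j x) q else π.traj x q

lemma auxSwap_raw (π : F.Raw) (i j : Fin n) (A K : Fin F.m) (hAK : A.val < K.val)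
    (hAi : F.memI A.val (π.traj i A.val)) (hAj : F.memI A.val (π.traj j A.val))
    (hKi : F.memI K.val (π.traj i K.val)) (hKj : F.memI K.val (π.traj j K.val)) :
    ∃ σ : F.Raw, ∀ x q, σ.traj x q = auxSwapTraj π i j A.val K.val x q := by
  have swap_ne : ∀ x : Fin n, x ≠ i → x ≠ j → Equiv.swap i j x = x := fun x h1 h2 =>
    Equiv.swap_apply_of_ne_of_ne h1 h2
  refine ⟨⟨auxSwapTraj π i j A.val K.val, ?_, ?_, ?_, ?_⟩, fun _ _ => rfl⟩
  · intro x
    simp only [auxSwapTraj]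
    rw [if_neg (by omega)]
    exact π.init x
  · intro q
    by_cases h : A.val < q ∧ q ≤ K.val
    · intro x y hxy
      simp only [auxSwapTraj, if_pos h] at hxy
      exact (Equiv.swap i j).injective (π.inj q hxy)
    · intro x y hxy
      simp only [auxSwapTraj, if_neg h] at hxy
      exact π.inj q hxy
  · -- step_out
    intro x q hn
    simp only [auxSwapTraj] at hn ⊢
    by_cases hW : A.val < q ∧ q ≤ K.val <;> by_cases hW' : A.val < q + 1 ∧ q + 1 ≤ K.val
    · rw [if_pos hW] at hn ⊢
      rw [if_pos hW']
      exact π.step_out _ q hn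
    · have hqK : q = K.val := by omega
      rw [if_pos hW] at hn ⊢
      rw [if_neg hW']
      subst hqK
      by_cases h1 : x = i
      · subst h1; rw [Equiv.swap_apply_left] at hn; exact absurd hKj hn
      by_cases h2 : x = j
      · subst h2; rw [Equiv.swap_apply_right] at hn; exact absurd hKi hn
      · rw [swap_ne x h1 h2] at hn ⊢
        exact π.step_out x K.val hn
    · have hqA : q = A.val := by omega
      rw [if_neg hW] at hn ⊢
      rw [if_pos hW']
      subst hqA
      by_cases h1 : x = i
      · subst h1; exact absurd hAi hn
      by_cases h2 : x = j
      · subst h2; exact absurd hAj hn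
      · rw [swap_ne x h1 h2]
        exact π.step_out x A.val hn
    · rw [if_neg hW] at hn ⊢
      rw [if_neg hW']
      exact π.step_out x q hn
  · -- step_in
    intro x q hmem
    simp only [auxSwapTraj] at hmem ⊢
    by_cases hW : A.val < q ∧ q ≤ K.val <;> by_cases hW' : A.val < q + 1 ∧ q + 1 ≤ K.val
    · rw [if_pos hW] at hmem
      rw [if_pos hW']
      exact π.step_in _ q hmem
    · have hqK : q = K.val := by omega
      rw [if_pos hW] at hmem
      rw [if_neg hW']
      subst hqK
      by_cases h1 : x = i
      · subst h1; exact π.step_in _ K.val hKi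
      by_cases h2 : x = j
      · subst h2; exact π.step_in _ K.val hKj
      · rw [swap_ne x h1 h2] at hmem
        exact π.step_in x K.val hmem
    · have hqA : q = A.val := by omega
      rw [if_neg hW] at hmem
      rw [if_pos hW']
      subst hqA
      by_cases h1 : x = i
      · subst h1; rw [Equiv.swap_apply_left]; exact π.step_in j A.val hAj
      by_cases h2 : x = j
      · subst h2; rw [Equiv.swap_apply_right]; exact π.step_in i A.val hAi
      · rw [swap_ne x h1 h2]
        exact π.step_in x A.val hmem
    · rw [if_neg hW] at hmem
      rw [if_neg hW']
      exact π.step_in x q hmem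

/-- The set of inverted pairs among the paths entering star `k`, at stage `k`. -/
noncomputable def auxInv (π : F.Raw) (k : Fin F.m) : Finset (Fin n × Fin n) :=
  @Finset.filter _ (fun p : Fin n × Fin n => p.1 < p.2 ∧
    F.memI k.val (π.traj p.1 k.val) ∧ F.memI k.val (π.traj p.2 k.val) ∧
    π.traj p.2 k.val < π.traj p.1 k.val) (Classical.decPred _) Finset.univ

lemma aux_mem_auxInv {π : F.Raw} {k : Fin F.m} {p : Fin n × Fin n} :
    p ∈ auxInv π k ↔ (p.1 < p.2 ∧
      F.memI k.val (π.traj p.1 k.val) ∧ F.memI k.val (π.traj p.2 k.val) ∧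
      π.traj p.2 k.val < π.traj p.1 k.val) := by
  simp [auxInv]

/-- If there is an inverted pair, there is one occupying adjacent levels. -/
lemma aux_adj (π : F.Raw) (k : Fin F.m) (h : (auxInv π k).Nonempty) :
    ∃ i j : Fin n, i < j ∧ F.memI k.val (π.traj i k.val) ∧ F.memI k.val (π.traj j k.val) ∧
      (π.traj i k.val).val = (π.traj j k.val).val + 1 := by
  obtain ⟨⟨x, y⟩, hmem, hmin⟩ := Finset.exists_min_image (auxInv π k)
    (fun p => (π.traj p.1 k.val).val - (π.traj p.2 k.val).val) h
  obtain ⟨hxy, hmx, hmy, hlt⟩ := aux_mem_auxInv.mp hmem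
  replace hxy : x < y := hxy
  replace hmx : F.memI k.val (π.traj x k.val) := hmx
  replace hmy : F.memI k.val (π.traj y k.val) := hmy
  replace hlt : π.traj y k.val < π.traj x k.val := hlt
  by_cases hadj : (π.traj x k.val).val = (π.traj y k.val).val + 1
  · exact ⟨x, y, hxy, hmx, hmy, hadj⟩
  exfalso
  have hlt' : (π.traj y k.val).val < (π.traj x k.val).val := hlt
  have hcn : (π.traj y k.val).val + 1 < n := by have := (π.traj x k.val).isLt; omega
  set c : Fin n := ⟨(π.traj y k.val).val + 1, hcn⟩ with hc
  have hcval : c.val = (π.traj y k.val).val + 1 := rfl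
  obtain ⟨z, hz⟩ := (Finite.injective_iff_bijective.mp (π.inj k.val)).2 c
  replace hz : π.traj z k.val = c := hz
  have hzval : (π.traj z k.val).val = (π.traj y k.val).val + 1 := by rw [hz]
  have hzx : z ≠ x := by
    intro he
    rw [← he] at hadj
    exact hadj hzval
  have hzy : z ≠ y := by
    intro he
    rw [he] at hzval
    omega
  obtain ⟨hl1, hh1⟩ := aux_memI_fin.mp hmx
  obtain ⟨hl2, hh2⟩ := aux_memI_fin.mp hmy
  have hmz : F.memI k.val (π.traj z k.val) := by
    refine aux_memI_fin.mpr ⟨?_, ?_⟩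
    · rw [Fin.le_def] at hl2 ⊢
      omega
    · rw [Fin.le_def] at hh1 ⊢
      omega
  rcases lt_or_gt_of_ne hzx with hzx' | hzx'
  · rcases lt_or_gt_of_ne hzy with hzy' | hzy'
    · -- z < y : (z, y) is an inversion with smaller gap
      have hmem' : (z, y) ∈ auxInv π k := by
        refine aux_mem_auxInv.mpr ⟨hzy', hmz, hmy, ?_⟩
        show π.traj y k.val < π.traj z k.val
        exact Fin.lt_def.mpr (by omega)
      have h5 : (π.traj x k.val).val - (π.traj y k.val).val ≤
          (π.traj z k.val).val - (π.traj y k.val).val := hmin (z, y) hmem'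
      omega
    · -- y < z and z < x and x < y : impossible
      have h1 : y.val < z.val := hzy'
      have h2 : z.val < x.val := hzx'
      have h3 : x.val < y.val := hxy
      omega
  · -- x < z : (x, z) is an inversion with smaller gap
    have hmem' : (x, z) ∈ auxInv π k := by
      refine aux_mem_auxInv.mpr ⟨hzx', hmx, hmz, ?_⟩
      show π.traj z k.val < π.traj x k.val
      exact Fin.lt_def.mpr (by omega)
    have h5 : (π.traj x k.val).val - (π.traj y k.val).val ≤
        (π.traj x k.val).val - (π.traj z k.val).val := hmin (x, z) hmem'
    omega

/-- Bubble-sort step: one swap strictly decreases the number of inversions at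
star `k`, without touching any stage beyond `k`. -/
lemma aux_bubble (π : F.Raw) (k : Fin F.m) (h : (auxInv π k).Nonempty) :
    ∃ σ : F.Raw, (∀ x q, k.val < q → σ.traj x q = π.traj x q) ∧
      (auxInv σ k).card < (auxInv π k).card := by
  obtain ⟨i0, j0, hij, hmi, hmj, hadj⟩ := aux_adj π k h
  have hne : i0 ≠ j0 := ne_of_lt hij
  have hlt : π.traj j0 k.val < π.traj i0 k.val := Fin.lt_def.mpr (by omega)
  -- the two paths must have entered a common star earlier
  have hnotiff : ¬ ((π.traj i0 k.val < π.traj j0 k.val) ↔ i0 < j0) := by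
    intro hiff
    exact lt_asymm hlt (hiff.mpr hij)
  have hearlier : ∃ q' < k.val, Raw.auxBothIn π i0 j0 q' := by
    by_contra hcon
    push_neg at hcon
    exact hnotiff (π.aux_orderPreserve hne k.val (fun q' hq' => hcon q' hq'))
  obtain ⟨qA, hqAk, hbothA⟩ := hearlier
  have hqAm : qA < F.m := hbothA.1.1
  obtain ⟨σ, hσ⟩ := auxSwap_raw π i0 j0 ⟨qA, hqAm⟩ k hqAk hbothA.1 hbothA.2 hmi hmj
  have hagree : ∀ x q, k.val < q → σ.traj x q = π.traj x q := by
    intro x q hq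
    rw [hσ x q]
    simp only [auxSwapTraj]
    rw [if_neg (by omega)]
  have hstageK : ∀ x, σ.traj x k.val = π.traj (Equiv.swap i0 j0 x) k.val := by
    intro x
    rw [hσ x k.val]
    simp only [auxSwapTraj]
    exact if_pos ⟨hqAk, le_refl _⟩
  have hmemij : (i0, j0) ∈ auxInv π k := aux_mem_auxInv.mpr ⟨hij, hmi, hmj, hlt⟩
  have hsub : auxInv σ k ⊆ (auxInv π k).erase (i0, j0) := by
    rintro ⟨u, w⟩ huw
    obtain ⟨huw1, hmu, hmw, huwlt⟩ := aux_mem_auxInv.mp huw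
    replace huw1 : u < w := huw1
    replace hmu : F.memI k.val (σ.traj u k.val) := hmu
    replace hmw : F.memI k.val (σ.traj w k.val) := hmw
    replace huwlt : σ.traj w k.val < σ.traj u k.val := huwlt
    rw [hstageK] at hmu huwlt
    rw [hstageK] at hmw huwlt
    rw [Finset.mem_erase]
    by_cases h1 : u = i0
    · subst h1
      by_cases h2 : w = j0
      · subst h2
        exfalso
        rw [Equiv.swap_apply_left, Equiv.swap_apply_right] at huwlt
        exact lt_asymm huwlt hlt
      · have hwi : w ≠ u := ne_of_gt huw1
        rw [Equiv.swap_apply_left] at hmu huwlt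
        rw [Equiv.swap_apply_of_ne_of_ne hwi h2] at hmw huwlt
        refine ⟨by simp [h2], aux_mem_auxInv.mpr ⟨huw1, hmi, hmw, lt_trans huwlt hlt⟩⟩
    · by_cases h2 : u = j0
      · subst h2
        have hwj : w ≠ u := ne_of_gt huw1
        have hwi : w ≠ i0 := ne_of_gt (lt_trans hij huw1)
        rw [Equiv.swap_apply_right] at hmu huwlt
        rw [Equiv.swap_apply_of_ne_of_ne hwi hwj] at hmw huwlt
        have hwne : π.traj w k.val ≠ π.traj u k.val := fun hh => hwj (π.inj k.val hh)
        have hwu : π.traj w k.val < π.traj u k.val := by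
          rw [Fin.lt_def] at huwlt ⊢
          rw [Fin.lt_def] at hlt
          have := Fin.val_ne_iff.mpr hwne
          omega
        exact ⟨by simp [h1], aux_mem_auxInv.mpr ⟨huw1, hmj, hmw, hwu⟩⟩
      · rw [Equiv.swap_apply_of_ne_of_ne h1 h2] at hmu huwlt
        by_cases h3 : w = i0
        · subst h3
          rw [Equiv.swap_apply_left] at hmw huwlt
          have hune : π.traj u k.val ≠ π.traj w k.val := fun hh => h1 (π.inj k.val hh)
          have hwu : π.traj w k.val < π.traj u k.val := by
            rw [Fin.lt_def] at huwlt ⊢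
            rw [Fin.lt_def] at hlt
            have := Fin.val_ne_iff.mpr hune
            omega
          exact ⟨by simp [h1], aux_mem_auxInv.mpr ⟨huw1, hmu, hmi, hwu⟩⟩
        · by_cases h4 : w = j0
          · subst h4
            rw [Equiv.swap_apply_right] at hmw huwlt
            exact ⟨by simp [h1], aux_mem_auxInv.mpr
              ⟨huw1, hmu, hmj, lt_trans hlt huwlt⟩⟩
          · rw [Equiv.swap_apply_of_ne_of_ne h3 h4] at hmw huwlt
            exact ⟨by simp [h1], aux_mem_auxInv.mpr ⟨huw1, hmu, hmw, huwlt⟩⟩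
  exact ⟨σ, hagree, lt_of_le_of_lt (Finset.card_le_card hsub)
    (Finset.card_erase_lt_of_mem hmemij)⟩

/-- Sorting: repeated bubble steps remove all inversions at star `k`. -/
lemma aux_sort (k : Fin F.m) :
    ∀ N (π : F.Raw), (auxInv π k).card ≤ N →
      ∃ σ : F.Raw, (∀ x q, k.val < q → σ.traj x q = π.traj x q) ∧
        (auxInv σ k).card = 0 := by
  intro N
  induction N with
  | zero => intro π hN; exact ⟨π, fun _ _ _ => rfl, by omega⟩
  | succ N ih =>
    intro π hN
    by_cases h0 : (auxInv π k).card = 0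
    · exact ⟨π, fun _ _ _ => rfl, h0⟩
    · obtain ⟨σ₁, ha1, hc1⟩ := aux_bubble π k (Finset.card_pos.mp (by omega))
      obtain ⟨σ₂, ha2, hc2⟩ := ih σ₁ (by omega)
      exact ⟨σ₂, fun x q hq => (ha2 x q hq).trans (ha1 x q hq), hc2⟩

end StarNetwork

/-- **Proposition 4.8** (Parisi–Skandera–Spahiu–Wang).  Fix a star network
`F`, `v ∈ S_n`, `π ∈ Π_v(F)` and `k ∈ [m]`.  Then there exists
`σ ∈ Π_v(F)` whose defects at each `x_p` with `p > k` coincide with those of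
`π`, and which has no defects at `x_k`. -/
theorem exists_family_without_defects_at_k {n : ℕ} (F : StarNetwork n)
    (v : Equiv.Perm (Fin n)) (π : F.Raw) (hπ : π.ptype = v) (k : Fin F.m) :
    ∃ σ : F.Raw, σ.ptype = v ∧
      (∀ p : Fin F.m, k < p → ∀ i j : Fin n,
        (σ.defect i j p ↔ π.defect i j p)) ∧
      (∀ i j : Fin n, ¬ σ.defect i j k) := by
  obtain ⟨σ, hagree, hzero⟩ :=
    StarNetwork.aux_sort k ((StarNetwork.auxInv π k).card) π (le_refl _)
  refine ⟨σ, ?_, ?_, ?_⟩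
  · rw [← hπ]
    apply Equiv.ext
    intro x
    show σ.traj x F.m = π.traj x F.m
    exact hagree x F.m k.isLt
  · intro p hp i j
    have hk : k.val < p.val := hp
    have h1 : σ.traj i p.val = π.traj i p.val := hagree i p.val hk
    have h2 : σ.traj j p.val = π.traj j p.val := hagree j p.val hk
    rw [σ.aux_defect_iff p, π.aux_defect_iff p, π.aux_meet_congr σ h1 h2, h1, h2]
  · intro i j hd
    rw [σ.aux_defect_iff k] at hd
    obtain ⟨hij, hm, hlt⟩ := hd
    have hmem : (i, j) ∈ StarNetwork.auxInv σ k :=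
      StarNetwork.aux_mem_auxInv.mpr ⟨hij,
        StarNetwork.aux_memI_fin.mpr ⟨hm.2.1.1, hm.2.1.2⟩,
        StarNetwork.aux_memI_fin.mpr ⟨hm.2.2.1.1, hm.2.2.1.2⟩, hlt⟩
    rw [Finset.card_eq_zero] at hzero
    rw [hzero] at hmem
    exact absurd hmem (Finset.notMem_empty _)
end

section
/- If w ∈ S_n contains the pattern 3412 and gap_{3412}(w) > 1, then w contains the pattern 45312 (equivalently: if w avoids the pattern 45312 and contains the pattern 3412, then gap_{3412}(w) = 1). -/
/-! Pattern containment and avoidance for permutations, the patterns used in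
the paper, and the 3412-gap statistic. -/

/-- `w` contains the pattern `u`: some subword of the one-line notation of `w`
has its letters in the same relative order as those of `u`. -/
def containsPat {n k : ℕ} (w : Equiv.Perm (Fin n)) (u : Equiv.Perm (Fin k)) :
    Prop :=
  ∃ ι : Fin k → Fin n, StrictMono ι ∧
    ∀ a b : Fin k, u a < u b ↔ w (ι a) < w (ι b)

/-- `w` avoids the pattern `u`. -/
def avoidsPat {n k : ℕ} (w : Equiv.Perm (Fin n)) (u : Equiv.Perm (Fin k)) :
    Prop :=
  ¬ containsPat w u

/-- The pattern `321` (0-indexed one-line notation `210`). -/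
noncomputable def pat321 : Equiv.Perm (Fin 3) :=
  Equiv.ofBijective (![2, 1, 0] : Fin 3 → Fin 3) (by decide)

/-- The pattern `3412` (0-indexed one-line notation `2301`). -/
noncomputable def pat3412 : Equiv.Perm (Fin 4) :=
  Equiv.ofBijective (![2, 3, 0, 1] : Fin 4 → Fin 4) (by decide)

/-- The pattern `4231` (0-indexed one-line notation `3120`). -/
noncomputable def pat4231 : Equiv.Perm (Fin 4) :=
  Equiv.ofBijective (![3, 1, 2, 0] : Fin 4 → Fin 4) (by decide)

/-- The pattern `45312` (0-indexed one-line notation `34201`). -/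
noncomputable def pat45312 : Equiv.Perm (Fin 5) :=
  Equiv.ofBijective (![3, 4, 2, 0, 1] : Fin 5 → Fin 5) (by decide)

/-- The pattern `56781234`. -/
noncomputable def pat56781234 : Equiv.Perm (Fin 8) :=
  Equiv.ofBijective (![4, 5, 6, 7, 0, 1, 2, 3] : Fin 8 → Fin 8) (by decide)

/-- The pattern `46781235`. -/
noncomputable def pat46781235 : Equiv.Perm (Fin 8) :=
  Equiv.ofBijective (![3, 5, 6, 7, 0, 1, 2, 4] : Fin 8 → Fin 8) (by decide)

/-- The pattern `56718234`. -/
noncomputable def pat56718234 : Equiv.Perm (Fin 8) :=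
  Equiv.ofBijective (![4, 5, 6, 0, 7, 1, 2, 3] : Fin 8 → Fin 8) (by decide)

/-- The pattern `46718235`. -/
noncomputable def pat46718235 : Equiv.Perm (Fin 8) :=
  Equiv.ofBijective (![3, 5, 6, 0, 7, 1, 2, 4] : Fin 8 → Fin 8) (by decide)

/-- The 3412-gap of `w`:
`gap_{3412}(w) = min { w_{i₁} - w_{i₄} | w_{i₁}w_{i₂}w_{i₃}w_{i₄} matches 3412 }`. -/
noncomputable def gap3412 {n : ℕ} (w : Equiv.Perm (Fin n)) : ℕ :=
  sInf {d : ℕ | ∃ ι : Fin 4 → Fin n, StrictMono ι ∧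
    (∀ a b : Fin 4, pat3412 a < pat3412 b ↔ w (ι a) < w (ι b)) ∧
    d = (w (ι 0)).val - (w (ι 3)).val}


lemma sm4aux {n : ℕ} (a b c d : Fin n) (h1 : a < b) (h2 : b < c) (h3 : c < d) :
    StrictMono (![a,b,c,d] : Fin 4 → Fin n) := by
  intro i j hij
  fin_cases i <;> fin_cases j <;> simp_all <;> omega

lemma sm5aux {n : ℕ} (a b c d e : Fin n) (h1 : a < b) (h2 : b < c) (h3 : c < d)
    (h4 : d < e) : StrictMono (![a,b,c,d,e] : Fin 5 → Fin n) := by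
  intro i j hij
  fin_cases i <;> fin_cases j <;> simp_all <;> omega

lemma pat3412_iff_aux {n : ℕ} (w : Equiv.Perm (Fin n)) (a b c d : Fin n)
    (H23 : w c < w d) (H30 : w d < w a) (H01 : w a < w b) :
    ∀ i j : Fin 4, pat3412 i < pat3412 j ↔
      w ((![a,b,c,d] : Fin 4 → Fin n) i) < w (![a,b,c,d] j) := by
  have H20 : w c < w a := H23.trans H30
  have H21 : w c < w b := H20.trans H01
  have H31 : w d < w b := H30.trans H01
  intro i j
  fin_cases i <;> fin_cases j <;>
    first
      | exact iff_of_false (by decide) (lt_irrefl _)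
      | exact iff_of_true (by decide) H23
      | exact iff_of_true (by decide) H30
      | exact iff_of_true (by decide) H01
      | exact iff_of_true (by decide) H20
      | exact iff_of_true (by decide) H21
      | exact iff_of_true (by decide) H31
      | exact iff_of_false (by decide) H23.asymm
      | exact iff_of_false (by decide) H30.asymm
      | exact iff_of_false (by decide) H01.asymm
      | exact iff_of_false (by decide) H20.asymm
      | exact iff_of_false (by decide) H21.asymm
      | exact iff_of_false (by decide) H31.asymm

lemma pat45312_iff_aux {n : ℕ} (w : Equiv.Perm (Fin n)) (a b c d e : Fin n)
    (H34 : w d < w e) (H42 : w e < w c) (H20 : w c < w a) (H01 : w a < w b) :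
    ∀ i j : Fin 5, pat45312 i < pat45312 j ↔
      w ((![a,b,c,d,e] : Fin 5 → Fin n) i) < w (![a,b,c,d,e] j) := by
  have H32 : w d < w c := H34.trans H42
  have H30 : w d < w a := H32.trans H20
  have H31 : w d < w b := H30.trans H01
  have H40 : w e < w a := H42.trans H20
  have H41 : w e < w b := H40.trans H01
  have H21 : w c < w b := H20.trans H01
  intro i j
  fin_cases i <;> fin_cases j <;>
    first
      | exact iff_of_false (by decide) (lt_irrefl _)
      | exact iff_of_true (by decide) H34
      | exact iff_of_true (by decide) H32
      | exact iff_of_true (by decide) H30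
      | exact iff_of_true (by decide) H31
      | exact iff_of_true (by decide) H42
      | exact iff_of_true (by decide) H40
      | exact iff_of_true (by decide) H41
      | exact iff_of_true (by decide) H20
      | exact iff_of_true (by decide) H21
      | exact iff_of_true (by decide) H01
      | exact iff_of_false (by decide) H34.asymm
      | exact iff_of_false (by decide) H32.asymm
      | exact iff_of_false (by decide) H30.asymm
      | exact iff_of_false (by decide) H31.asymm
      | exact iff_of_false (by decide) H42.asymm
      | exact iff_of_false (by decide) H40.asymm
      | exact iff_of_false (by decide) H41.asymm
      | exact iff_of_false (by decide) H20.asymm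
      | exact iff_of_false (by decide) H21.asymm
      | exact iff_of_false (by decide) H01.asymm
/-- If `w` contains the pattern `3412` and `gap_{3412}(w) > 1`, then `w`
contains the pattern `45312`. -/
theorem contains_45312_of_gap_gt_one {n : ℕ} (w : Equiv.Perm (Fin n))
    (h1 : containsPat w pat3412) (h2 : 1 < gap3412 w) :
    containsPat w pat45312 := by

  -- the set of gaps
  have hne : {d : ℕ | ∃ ι : Fin 4 → Fin n, StrictMono ι ∧
      (∀ a b : Fin 4, pat3412 a < pat3412 b ↔ w (ι a) < w (ι b)) ∧
      d = (w (ι 0)).val - (w (ι 3)).val}.Nonempty := by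
    obtain ⟨ι, hm, hp⟩ := h1
    exact ⟨_, ι, hm, hp, rfl⟩
  obtain ⟨ι, hmono, hpat, hd⟩ := Nat.sInf_mem hne
  have hle : ∀ d : ℕ, (∃ ι : Fin 4 → Fin n, StrictMono ι ∧
      (∀ a b : Fin 4, pat3412 a < pat3412 b ↔ w (ι a) < w (ι b)) ∧
      d = (w (ι 0)).val - (w (ι 3)).val) → gap3412 w ≤ d :=
    fun d hdm => Nat.sInf_le hdm
  have hd' : gap3412 w = (w (ι 0)).val - (w (ι 3)).val := hd
  clear hd hne
  -- the value chain of the minimal 3412 pattern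
  have h23 : w (ι 2) < w (ι 3) := (hpat 2 3).mp (by decide)
  have h30 : w (ι 3) < w (ι 0) := (hpat 3 0).mp (by decide)
  have h01 : w (ι 0) < w (ι 1) := (hpat 0 1).mp (by decide)
  have v23 : (w (ι 2)).val < (w (ι 3)).val := h23
  have v30 : (w (ι 3)).val < (w (ι 0)).val := h30
  have v01 : (w (ι 0)).val < (w (ι 1)).val := h01
  have hgap2 : (w (ι 3)).val + 2 ≤ (w (ι 0)).val := by omega
  -- the intermediate value v and its position j
  have hvlt : (w (ι 3)).val + 1 < n := lt_trans (by omega) (w (ι 0)).isLt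
  obtain ⟨j, hwj⟩ : ∃ j : Fin n, (w j).val = (w (ι 3)).val + 1 :=
    ⟨w.symm ⟨(w (ι 3)).val + 1, hvlt⟩, by simp⟩
  -- Fin-level inequalities involving w j
  have j3 : w (ι 3) < w j := by rw [Fin.lt_def]; omega
  have j2 : w (ι 2) < w j := by rw [Fin.lt_def]; omega
  have j0 : w j < w (ι 0) := by rw [Fin.lt_def]; omega
  have j1 : w j < w (ι 1) := by rw [Fin.lt_def]; omega
  rcases lt_trichotomy j (ι 1) with hA | hA | hA
  · -- j before ι 1 : pattern (j, ι 1, ι 2, ι 3) is a 3412 with gap 1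
    exfalso
    have hmem : gap3412 w ≤ 1 := by
      refine hle 1 ⟨![j, ι 1, ι 2, ι 3],
        sm4aux _ _ _ _ hA (hmono (by decide)) (hmono (by decide)),
        pat3412_iff_aux w j (ι 1) (ι 2) (ι 3) h23 j3 j1, ?_⟩
      show (1 : ℕ) = (w j).val - (w (ι 3)).val
      omega
    omega
  · -- j = ι 1 impossible
    exfalso
    have : w j = w (ι 1) := by rw [hA]
    have : (w j).val = (w (ι 1)).val := by rw [this]
    omega
  · rcases lt_trichotomy j (ι 2) with hB | hB | hB
    · -- ι 1 < j < ι 2 : the 45312 pattern (ι 0, ι 1, j, ι 2, ι 3)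
      exact ⟨![ι 0, ι 1, j, ι 2, ι 3],
        sm5aux _ _ _ _ _ (hmono (by decide)) hA hB (hmono (by decide)),
        pat45312_iff_aux w (ι 0) (ι 1) j (ι 2) (ι 3) h23 j3 j0 h01⟩
    · -- j = ι 2 impossible
      exfalso
      have : w j = w (ι 2) := by rw [hB]
      have : (w j).val = (w (ι 2)).val := by rw [this]
      omega
    · -- ι 2 < j : pattern (ι 0, ι 1, ι 2, j) has smaller gap
      exfalso
      have hmem : gap3412 w ≤ (w (ι 0)).val - ((w (ι 3)).val + 1) := by
        refine hle _ ⟨![ι 0, ι 1, ι 2, j],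
          sm4aux _ _ _ _ (hmono (by decide)) (hmono (by decide)) hB,
          pat3412_iff_aux w (ι 0) (ι 1) (ι 2) j j2 j0 h01, ?_⟩
        show (w (ι 0)).val - ((w (ι 3)).val + 1) = (w (ι 0)).val - (w j).val
        omega
      omega
end
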